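/- arXiv:math/0502098 — 3 statements merged into one kernel-verified Lean document; each statement's English description precedes it below -/
import Mathlib

section
/- Let T > 0 and let g : ℝ → ℝ^d be Lebesgue integrable. For a positive integer m set Δ_m = T/m and κ_m(s) = ⌊s/Δ_m⌋·Δ_m. Then ∫₀ᵀ ∫₀ᵀ ‖g(κ_m(s + a) − a) − g(s)‖ ds da → 0 as m → ∞. -/
/-!
For fixed `s`, the integrand is `Δ_m`-periodic in `a`, and over one period the point
`κ_m(s + a) - a` runs through `s - b`, `b ∈ (0, Δ_m]`. By Tonelli the double integral is therefore
`m ∫_{(0, Δ_m]} ∫₀ᵀ ‖g(s - b) - g(s)‖ ds db`, an average over `b ∈ (0, Δ_m]` of the `L¹` distance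
between `g` and its translate by `b`; this tends to `0` because translation is continuous on `L¹`.
-/

open MeasureTheory Set Filter Topology
open scoped ENNReal

theorem Function.periodic_comp_floor_div_mul_sub {α : Type*} {Δ : ℝ} (hΔ : Δ ≠ 0) (f : ℝ → α) :
    Function.Periodic (fun u => f (⌊u / Δ⌋ * Δ - u)) Δ := by
  intro u
  simp only [add_div, div_self hΔ, Int.floor_add_one, Int.cast_add, Int.cast_one]
  congr 1
  ring

namespace Function.Periodic

variable {Δ : ℝ} {G : ℝ → ℝ≥0∞}

theorem setLIntegral_Ioc_add_eq (hΔ : 0 < Δ) (hG : Periodic G Δ) (t : ℝ) :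
    ∫⁻ u in Ioc t (t + Δ), G u = ∫⁻ u in Ioc 0 Δ, G u := by
  have : Fact (0 < Δ) := ⟨hΔ⟩
  have h (r : ℝ) : ∫⁻ u in Ioc r (r + Δ), G u = ∫⁻ b : AddCircle Δ, hG.lift b := by
    rw [← AddCircle.lintegral_preimage Δ r]
    exact lintegral_congr fun x => (hG.lift_coe x).symm
  rw [h t, ← h 0, zero_add]

theorem setLIntegral_Ioc_add_natCast_mul (hΔ : 0 < Δ) (hG : Periodic G Δ) (t : ℝ) (n : ℕ) :
    ∫⁻ u in Ioc t (t + n * Δ), G u = n * ∫⁻ u in Ioc 0 Δ, G u := by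
  induction n with
  | zero => simp
  | succ n ih =>
    have hsplit : Ioc t (t + (n + 1 : ℕ) * Δ)
        = Ioc t (t + n * Δ) ∪ Ioc (t + n * Δ) (t + n * Δ + Δ) := by
      rw [Ioc_union_Ioc_eq_Ioc (le_add_of_nonneg_right (by positivity)) (by linarith)]
      push_cast
      ring_nf
    rw [hsplit, lintegral_union measurableSet_Ioc (Ioc_disjoint_Ioc_of_le le_rfl), ih,
      hG.setLIntegral_Ioc_add_eq hΔ]
    push_cast
    ring

end Function.Periodic

theorem setLIntegral_Icc_comp_floor_div_mul_sub {Δ : ℝ} (hΔ : 0 < Δ) (f : ℝ → ℝ≥0∞) (s : ℝ)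
    (n : ℕ) :
    ∫⁻ a in Icc 0 (n * Δ), f (⌊(s + a) / Δ⌋ * Δ - a) = n * ∫⁻ b in Ioc 0 Δ, f (s - b) := by
  set G : ℝ → ℝ≥0∞ := fun u => f (⌊u / Δ⌋ * Δ - u + s)
  have hG : Function.Periodic G Δ := Function.periodic_comp_floor_div_mul_sub hΔ.ne' (f <| · + s)
  have hshift : ∫⁻ a in Icc 0 (n * Δ), f (⌊(s + a) / Δ⌋ * Δ - a)
      = ∫⁻ u in Ioc s (s + n * Δ), G u := by
    have h := (measurePreserving_add_left volume s).setLIntegral_comp_preimage_emb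
      (measurableEmbedding_addLeft s) G (Ioc s (s + n * Δ))
    rw [preimage_const_add_Ioc, sub_self, add_sub_cancel_left] at h
    rw [← Measure.restrict_congr_set Ioc_ae_eq_Icc, ← h]
    refine lintegral_congr fun a => ?_
    simp only [G]
    congr 1
    ring
  have hG_Ico : EqOn G (f <| s - ·) (Ico 0 Δ) := fun u hu => by
    have : ⌊u / Δ⌋ = 0 :=
      Int.floor_eq_zero_iff.mpr ⟨div_nonneg hu.1 hΔ.le, (div_lt_one hΔ).mpr hu.2⟩
    simp only [G, this, Int.cast_zero, zero_mul, zero_sub, neg_add_eq_sub]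
  rw [hshift, hG.setLIntegral_Ioc_add_natCast_mul hΔ, ← Measure.restrict_congr_set Ico_ae_eq_Ioc,
    setLIntegral_congr_fun measurableSet_Ico hG_Ico]

/-- As `s` varies, `⌊(s + a) / Δ⌋ * Δ - a` takes only the countably many values `k * Δ - a`. -/
theorem ae_forall_comp_floor_div_mul_sub_eq {β : Type*} {g g₀ : ℝ → β} (h : g =ᵐ[volume] g₀)
    (Δ : ℝ) : ∀ᵐ a, ∀ s, g (⌊(s + a) / Δ⌋ * Δ - a) = g₀ (⌊(s + a) / Δ⌋ * Δ - a) := by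
  have : ∀ᵐ a, ∀ k : ℤ, g (k * Δ - a) = g₀ (k * Δ - a) := ae_all_iff.2 fun k =>
    (Measure.measurePreserving_sub_left volume (k * Δ)).quasiMeasurePreserving.ae_eq h
  filter_upwards [this] with a ha s using ha _

variable {E : Type*} [NormedAddCommGroup E]

theorem setLIntegral_Icc_lintegral_enorm_comp_floor_div_mul_sub {g : ℝ → E}
    (hg : AEStronglyMeasurable g) {ν : Measure ℝ} [SFinite ν] (hν : ν ≪ volume) {Δ : ℝ}
    (hΔ : 0 < Δ) (n : ℕ) :
    ∫⁻ a in Icc 0 (n * Δ), ∫⁻ s, ‖g (⌊(s + a) / Δ⌋ * Δ - a) - g s‖ₑ ∂ν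
      = n * ∫⁻ b in Ioc 0 Δ, ∫⁻ s, ‖g (s - b) - g s‖ₑ ∂ν := by
  set g₀ := hg.mk g
  have hg₀ : StronglyMeasurable g₀ := hg.stronglyMeasurable_mk
  have hgg₀ : ∀ᵐ s ∂ν, g s = g₀ s := hν.ae_le hg.ae_eq_mk
  have hgg₀_sub (b : ℝ) : ∀ᵐ s ∂ν, g (s - b) = g₀ (s - b) := hν.ae_le <|
    (measurePreserving_sub_right volume b).quasiMeasurePreserving.ae_eq hg.ae_eq_mk
  have hκ : Measurable fun p : ℝ × ℝ => ‖g₀ (⌊(p.2 + p.1) / Δ⌋ * Δ - p.1) - g₀ p.2‖ₑ := by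
    fun_prop
  have hτ : Measurable fun p : ℝ × ℝ => ‖g₀ (p.1 - p.2) - g₀ p.1‖ₑ := by fun_prop
  calc _ = ∫⁻ a in Icc 0 (n * Δ), ∫⁻ s, ‖g₀ (⌊(s + a) / Δ⌋ * Δ - a) - g₀ s‖ₑ ∂ν := by
        refine lintegral_congr_ae (ae_restrict_of_ae ?_)
        filter_upwards [ae_forall_comp_floor_div_mul_sub_eq hg.ae_eq_mk Δ] with a ha
        refine lintegral_congr_ae ?_
        filter_upwards [hgg₀] with s hs
        rw [ha, hs]
    _ = ∫⁻ s, (∫⁻ a in Icc 0 (n * Δ), ‖g₀ (⌊(s + a) / Δ⌋ * Δ - a) - g₀ s‖ₑ) ∂ν :=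
        lintegral_lintegral_swap hκ.aemeasurable
    _ = ∫⁻ s, n * (∫⁻ b in Ioc 0 Δ, ‖g₀ (s - b) - g₀ s‖ₑ) ∂ν := lintegral_congr fun s =>
        setLIntegral_Icc_comp_floor_div_mul_sub hΔ (fun x => ‖g₀ x - g₀ s‖ₑ) s n
    _ = n * ∫⁻ b in Ioc 0 Δ, ∫⁻ s, ‖g₀ (s - b) - g₀ s‖ₑ ∂ν := by
        rw [lintegral_const_mul' _ _ (ENNReal.natCast_ne_top n),
          lintegral_lintegral_swap hτ.aemeasurable]
    _ = _ := by
        congr 1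
        refine lintegral_congr fun b => lintegral_congr_ae ?_
        filter_upwards [hgg₀, hgg₀_sub b] with s hs hsb
        rw [hs, hsb]

theorem MeasureTheory.Integrable.tendsto_lintegral_enorm_comp_add_sub {G : Type*} [AddMonoid G]
    [TopologicalSpace G] [ContinuousAdd G] [R1Space G] [MeasurableSpace G] [BorelSpace G]
    {μ : Measure G} [μ.IsAddLeftInvariant] [IsLocallyFiniteMeasure μ] [μ.InnerRegularCompactLTTop]
    {g : G → E} (hg : Integrable g μ) :
    Tendsto (fun b => ∫⁻ x, ‖g (b + x) - g x‖ₑ ∂μ) (𝓝 0) (𝓝 0) := by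
  have : Fact ((1 : ℝ≥0∞) ≠ ∞) := ⟨ENNReal.one_ne_top⟩
  have hg₁ : MemLp g 1 μ := memLp_one_iff_integrable.2 hg
  have hcont : Continuous fun b : G => DomAddAct.mk b +ᵥ hg₁.toLp g :=
    continuous_vadd.comp (DomAddAct.continuous_mk.prodMk continuous_const)
  have hlim := tendsto_iff_edist_tendsto_0.1 (hcont.tendsto 0)
  simpa only [DomAddAct.mk_zero, zero_vadd, DomAddAct.mk_vadd_toLp, Lp.edist_toLp_toLp,
    eLpNorm_one_eq_lintegral_enorm, vadd_eq_add, Pi.sub_apply] using hlim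

theorem MeasureTheory.Integrable.tendsto_setLIntegral_enorm_comp_sub_sub {g : ℝ → E}
    (hg : Integrable g) (S : Set ℝ) :
    Tendsto (fun b => ∫⁻ s in S, ‖g (s - b) - g s‖ₑ) (𝓝 0) (𝓝 0) := by
  have hshift := hg.tendsto_lintegral_enorm_comp_add_sub.comp
    (continuous_neg.tendsto' (0 : ℝ) 0 neg_zero)
  refine tendsto_of_tendsto_of_tendsto_of_le_of_le tendsto_const_nhds hshift (fun _ => zero_le)
    fun b => ?_
  simpa only [Function.comp_apply, neg_add_eq_sub] using setLIntegral_le_lintegral _ _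

theorem natCast_mul_setLIntegral_Ioc_le {Φ : ℝ → ℝ≥0∞} {Δ : ℝ} {c : ℝ≥0∞}
    (hΦ : ∀ b ∈ Ioc 0 Δ, Φ b ≤ c) (n : ℕ) :
    n * ∫⁻ b in Ioc 0 Δ, Φ b ≤ c * ENNReal.ofReal (n * Δ) := by
  calc n * ∫⁻ b in Ioc 0 Δ, Φ b ≤ n * ∫⁻ _ in Ioc 0 Δ, c := by
        gcongr n * ?_
        exact setLIntegral_mono measurable_const hΦ
    _ = c * ENNReal.ofReal (n * Δ) := by
        rw [setLIntegral_const, Real.volume_Ioc, sub_zero, ENNReal.ofReal_mul (Nat.cast_nonneg n),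
          ENNReal.ofReal_natCast]
        ring

theorem tendsto_natCast_mul_setLIntegral_Ioc_div {Φ : ℝ → ℝ≥0∞} (hΦ : Tendsto Φ (𝓝[>] 0) (𝓝 0))
    {T : ℝ} (hT : 0 < T) :
    Tendsto (fun n : ℕ => n * ∫⁻ b in Ioc 0 (T / n), Φ b) atTop (𝓝 0) := by
  refine ENNReal.tendsto_nhds_zero.2 fun ε hε => ?_
  have hT' : ENNReal.ofReal T ≠ 0 := (ENNReal.ofReal_pos.2 hT).ne'
  obtain ⟨δ, hδ, hΦδ⟩ := mem_nhdsGT_iff_exists_Ioc_subset.1 <|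
    ENNReal.tendsto_nhds_zero.1 hΦ (ε / ENNReal.ofReal T)
      (ENNReal.div_pos hε.ne' ENNReal.ofReal_ne_top)
  filter_upwards [(tendsto_const_div_atTop_nhds_zero_nat T).eventually (ge_mem_nhds hδ),
    eventually_ne_atTop 0] with n hn hn0
  calc n * ∫⁻ b in Ioc 0 (T / n), Φ b
      ≤ ε / ENNReal.ofReal T * ENNReal.ofReal (n * (T / n)) :=
        natCast_mul_setLIntegral_Ioc_le (fun b hb => hΦδ (Ioc_subset_Ioc_right hn hb)) n
    _ = ε := by
        rw [mul_div_cancel₀ _ (Nat.cast_ne_zero.2 hn0),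
          ENNReal.div_mul_cancel hT' ENNReal.ofReal_ne_top]

theorem enorm_integral_integral_norm_le {α β : Type*} [MeasurableSpace α] [MeasurableSpace β]
    {μ : Measure α} {ν : Measure β} (f : α → β → E) :
    ‖∫ a, ∫ b, ‖f a b‖ ∂ν ∂μ‖ₑ ≤ ∫⁻ a, ∫⁻ b, ‖f a b‖ₑ ∂ν ∂μ :=
  (enorm_integral_le_lintegral_enorm _).trans <| lintegral_mono fun _ =>
    (enorm_integral_le_lintegral_enorm _).trans_eq <| by simp only [enorm_norm]

/-- The folklore L¹-approximation lemma: for integrable `g`, with `Δ_m = T/m` and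
`κ_m(s) = ⌊s/Δ_m⌋Δ_m`, the double integral `∫₀ᵀ∫₀ᵀ ‖g(κ_m(s+a) − a) − g(s)‖ ds da`
tends to `0` as `m → ∞`. -/
theorem stmt4 {d : ℕ} (T : ℝ) (hT : 0 < T) (g : ℝ → EuclideanSpace ℝ (Fin d))
    (hg : Integrable g) :
    Tendsto (fun m : ℕ =>
        ∫ a in Icc (0:ℝ) T, ∫ s in Icc (0:ℝ) T,
          ‖g ((⌊(s + a) / (T / m)⌋ : ℝ) * (T / m) - a) - g s‖)
      atTop (nhds 0) := by
  have hL (m : ℕ) (hm : m ≠ 0) :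
      ∫⁻ a in Icc 0 T, ∫⁻ s in Icc 0 T, ‖g (⌊(s + a) / (T / m)⌋ * (T / m) - a) - g s‖ₑ
        = m * ∫⁻ b in Ioc 0 (T / m), ∫⁻ s in Icc 0 T, ‖g (s - b) - g s‖ₑ := by
    have h := setLIntegral_Icc_lintegral_enorm_comp_floor_div_mul_sub hg.1
      (Measure.absolutelyContinuous_restrict (s := Icc 0 T)) (by positivity : 0 < T / m) m
    rwa [mul_div_cancel₀ _ (Nat.cast_ne_zero.2 hm)] at h
  have hlim := tendsto_natCast_mul_setLIntegral_Ioc_div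
    ((hg.tendsto_setLIntegral_enorm_comp_sub_sub (Icc 0 T)).mono_left nhdsWithin_le_nhds) hT
  refine tendsto_zero_iff_enorm_tendsto_zero.2 <| tendsto_of_tendsto_of_tendsto_of_le_of_le
    tendsto_const_nhds (hlim.congr' ?_) (fun _ => zero_le) fun _ =>
      enorm_integral_integral_norm_le _
  filter_upwards [eventually_ne_atTop 0] with m hm using (hL m hm).symm
end

section
/- Let M, γ ∈ ℝ with γ < M and λ > 0. For each t > 0 let ξ_t be a real random variable on a probability space (Ω_t, F_t, P_t) and A_t ∈ F_t an event such that ξ_t ≤ M t almost surely, ξ_t ≤ γ t almost surely on A_t, and P_t(A_tᶜ) ≤ e^{−λ t} for all sufficiently large t. Then limsup_{z→0⁺} limsup_{t→∞} (z t)^{−1} log E[e^{z ξ_t}] ≤ γ; in particular this double upper limit is strictly less than M. -/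
open MeasureTheory Set Filter

/-!
On `A_t` the integrand `e^{zξ_t}` is at most `e^{zγt}`; off `A_t` it is at most `e^{zMt}`, on a set
of probability at most `e^{-λt}`. Once `z (M - γ) ≤ λ` the second contribution is also at most
`e^{zγt}`, so `E[e^{zξ_t}] ≤ 2 e^{zγt}` and `(zt)⁻¹ log E[e^{zξ_t}] ≤ γ + log 2 / (zt) → γ`.
-/

open Real

section

variable {Ω : Type*} [MeasurableSpace Ω] {μ : Measure Ω} [IsProbabilityMeasure μ]

theorem integral_le_add_mul_measureReal_compl {f : Ω → ℝ} {A : Set Ω} {a b : ℝ}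
    (ha : 0 ≤ a) (hb : 0 ≤ b) (hfb : ∀ᵐ ω ∂μ, f ω ≤ b) (hfa : ∀ᵐ ω ∂μ, ω ∈ A → f ω ≤ a) :
    ∫ ω, f ω ∂μ ≤ a + b * μ.real Aᶜ := by
  by_cases hf : Integrable f μ
  swap
  · rw [integral_undef hf]
    positivity
  set S := toMeasurable μ Aᶜ
  have hS : MeasurableSet S := measurableSet_toMeasurable μ _
  have hle : f ≤ᵐ[μ] fun ω => S.indicator (fun _ => b) ω + a := by
    filter_upwards [hfb, hfa] with ω hωb hωa
    by_cases hω : ω ∈ A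
    · have := indicator_nonneg (fun _ _ => hb) ω (s := S)
      linarith [hωa hω]
    · rw [indicator_of_mem (subset_toMeasurable μ _ hω)]
      linarith
  calc ∫ ω, f ω ∂μ ≤ ∫ ω, S.indicator (fun _ => b) ω + a ∂μ :=
        integral_mono_ae hf (((integrable_const b).indicator hS).add (integrable_const a)) hle
    _ = a + b * μ.real Aᶜ := by
        rw [integral_add ((integrable_const b).indicator hS) (integrable_const a),
          integral_indicator_const b hS, integral_const, probReal_univ, measureReal_def,
          measureReal_def, measure_toMeasurable, smul_eq_mul, smul_eq_mul]
        ring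

theorem integral_exp_mul_le_two_mul_exp {ξ : Ω → ℝ} {A : Set Ω} {z m g ℓ : ℝ} (hz : 0 ≤ z)
    (hm : ∀ᵐ ω ∂μ, ξ ω ≤ m) (hg : ∀ᵐ ω ∂μ, ω ∈ A → ξ ω ≤ g) (hA : μ.real Aᶜ ≤ exp (-ℓ))
    (hzℓ : z * (m - g) ≤ ℓ) :
    ∫ ω, exp (z * ξ ω) ∂μ ≤ 2 * exp (z * g) := by
  have hgood : ∀ᵐ ω ∂μ, ω ∈ A → exp (z * ξ ω) ≤ exp (z * g) := by
    filter_upwards [hg] with ω hω hωA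
    exact exp_le_exp.2 (mul_le_mul_of_nonneg_left (hω hωA) hz)
  have hall : ∀ᵐ ω ∂μ, exp (z * ξ ω) ≤ exp (z * m) := by
    filter_upwards [hm] with ω hω
    exact exp_le_exp.2 (mul_le_mul_of_nonneg_left hω hz)
  have hbad : exp (z * m) * exp (-ℓ) ≤ exp (z * g) := by
    rw [← exp_add]
    exact exp_le_exp.2 (by linarith)
  calc ∫ ω, exp (z * ξ ω) ∂μ ≤ exp (z * g) + exp (z * m) * μ.real Aᶜ :=
        integral_le_add_mul_measureReal_compl (exp_pos _).le (exp_pos _).le hall hgood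
    _ ≤ exp (z * g) + exp (z * m) * exp (-ℓ) := by gcongr
    _ ≤ 2 * exp (z * g) := by linarith

theorem log_integral_exp_mul_le {ξ : Ω → ℝ} {A : Set Ω} {z m g ℓ : ℝ} (hξ : AEMeasurable ξ μ)
    (hz : 0 ≤ z) (hm : ∀ᵐ ω ∂μ, ξ ω ≤ m) (hg : ∀ᵐ ω ∂μ, ω ∈ A → ξ ω ≤ g)
    (hA : μ.real Aᶜ ≤ exp (-ℓ)) (hzℓ : z * (m - g) ≤ ℓ) :
    log (∫ ω, exp (z * ξ ω) ∂μ) ≤ log 2 + z * g := by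
  have hint : Integrable (fun ω => exp (z * ξ ω)) μ := by
    refine (integrable_const (exp (z * m))).mono' (hξ.const_mul z).exp.aestronglyMeasurable ?_
    filter_upwards [hm] with ω hω
    rw [norm_of_nonneg (exp_pos _).le]
    exact exp_le_exp.2 (mul_le_mul_of_nonneg_left hω hz)
  calc log (∫ ω, exp (z * ξ ω) ∂μ) ≤ log (2 * exp (z * g)) :=
        log_le_log (integral_exp_pos hint) (integral_exp_mul_le_two_mul_exp hz hm hg hA hzℓ)
    _ = log 2 + z * g := by rw [log_mul two_ne_zero (exp_pos _).ne', log_exp]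

end

theorem limsup_inv_mul_log_le {I : ℝ → ℝ} {z γ C : ℝ} (hz : 0 < z)
    (hI : ∀ᶠ t in atTop, log (I t) ≤ C + z * (γ * t)) :
    limsup (fun t => (((z * t)⁻¹ * log (I t) : ℝ) : EReal)) atTop ≤ γ := by
  have hbound : ∀ᶠ t in atTop,
      (((z * t)⁻¹ * log (I t) : ℝ) : EReal) ≤ ((γ + C / (z * t) : ℝ) : EReal) := by
    filter_upwards [hI, eventually_gt_atTop 0] with t ht ht0
    have hzt : 0 < z * t := mul_pos hz ht0
    rw [EReal.coe_le_coe_iff]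
    calc (z * t)⁻¹ * log (I t) ≤ (z * t)⁻¹ * (C + z * (γ * t)) := by gcongr
      _ = γ + C / (z * t) := by field_simp; ring
  have hlim : Tendsto (fun t => ((γ + C / (z * t) : ℝ) : EReal)) atTop (nhds γ) := by
    refine EReal.tendsto_coe.2 ?_
    simpa using tendsto_const_nhds.add
      (tendsto_const_nhds.div_atTop (tendsto_id.const_mul_atTop hz))
  exact (limsup_le_limsup hbound).trans_eq hlim.limsup_eq

theorem stmt14_general (M γ lam : ℝ) (hγM : γ < M) (hlam : 0 < lam)
    (Ω : ℝ → Type*) [∀ t, MeasurableSpace (Ω t)] (P : ∀ t, Measure (Ω t))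
    [∀ t, IsProbabilityMeasure (P t)]
    (ξ : ∀ t, Ω t → ℝ) (hξ : ∀ t, Measurable (ξ t))
    (A : ∀ t, Set (Ω t))
    (hM : ∀ t, 0 < t → ∀ᵐ ω ∂P t, ξ t ω ≤ M * t)
    (hA : ∀ t, 0 < t → ∀ᵐ ω ∂P t, ω ∈ A t → ξ t ω ≤ γ * t)
    (hP : ∃ t₀ : ℝ, ∀ t ≥ t₀, P t (A t)ᶜ ≤ ENNReal.ofReal (Real.exp (-lam * t))) :
    Filter.limsup (fun z : ℝ =>
        Filter.limsup (fun t : ℝ =>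
            (((z * t)⁻¹ * Real.log (∫ ω, Real.exp (z * ξ t ω) ∂P t) : ℝ) : EReal))
          atTop)
      (nhdsWithin 0 (Set.Ioi 0)) ≤ (γ : EReal) ∧
    Filter.limsup (fun z : ℝ =>
        Filter.limsup (fun t : ℝ =>
            (((z * t)⁻¹ * Real.log (∫ ω, Real.exp (z * ξ t ω) ∂P t) : ℝ) : EReal))
          atTop)
      (nhdsWithin 0 (Set.Ioi 0)) < (M : EReal) := by
  obtain ⟨t₀, ht₀⟩ := hP
  have hMγ : 0 < M - γ := sub_pos.2 hγM
  have hinner : ∀ z ∈ Ioo 0 (lam / (M - γ)),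
      limsup (fun t : ℝ => (((z * t)⁻¹ * log (∫ ω, exp (z * ξ t ω) ∂P t) : ℝ) : EReal)) atTop
        ≤ γ := by
    rintro z ⟨hz, hzc⟩
    refine limsup_inv_mul_log_le (C := log 2) hz ?_
    filter_upwards [eventually_ge_atTop t₀, eventually_gt_atTop 0] with t ht ht0
    refine log_integral_exp_mul_le (ℓ := lam * t) (hξ t).aemeasurable hz.le (hM t ht0)
      (hA t ht0) ?_ ?_
    · rw [measureReal_def, ← neg_mul]
      exact ENNReal.toReal_le_of_le_ofReal (exp_pos _).le (ht₀ t ht)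
    · have := (lt_div_iff₀ hMγ).1 hzc
      nlinarith
  have hle : limsup (fun z : ℝ => limsup (fun t : ℝ =>
      (((z * t)⁻¹ * log (∫ ω, exp (z * ξ t ω) ∂P t) : ℝ) : EReal)) atTop)
      (nhdsWithin 0 (Ioi 0)) ≤ γ :=
    limsup_le_of_le (by isBoundedDefault)
      (eventually_of_mem (Ioo_mem_nhdsGT (div_pos hlam hMγ)) hinner)
  exact ⟨hle, hle.trans_lt (EReal.coe_lt_coe_iff.2 hγM)⟩

/-- If `ξ_t ≤ Mt` a.s., `ξ_t ≤ γt` a.s. on `A_t` with `γ < M`, and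
`P_t(A_tᶜ) ≤ e^{−λt}` for large `t`, then
`limsup_{z→0⁺} limsup_{t→∞} (zt)⁻¹ log E[e^{zξ_t}] ≤ γ < M`. -/
theorem stmt14 (M γ lam : ℝ) (hγM : γ < M) (hlam : 0 < lam)
    (Ω : ℝ → Type*) [∀ t, MeasurableSpace (Ω t)] (P : ∀ t, Measure (Ω t))
    [∀ t, IsProbabilityMeasure (P t)]
    (ξ : ∀ t, Ω t → ℝ) (hξ : ∀ t, Measurable (ξ t))
    (A : ∀ t, Set (Ω t)) (hAmeas : ∀ t, MeasurableSet (A t))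
    (hM : ∀ t, 0 < t → ∀ᵐ ω ∂P t, ξ t ω ≤ M * t)
    (hA : ∀ t, 0 < t → ∀ᵐ ω ∂P t, ω ∈ A t → ξ t ω ≤ γ * t)
    (hP : ∃ t₀ : ℝ, ∀ t ≥ t₀, P t (A t)ᶜ ≤ ENNReal.ofReal (Real.exp (-lam * t))) :
    Filter.limsup (fun z : ℝ =>
        Filter.limsup (fun t : ℝ =>
            (((z * t)⁻¹ * Real.log (∫ ω, Real.exp (z * ξ t ω) ∂P t) : ℝ) : EReal))
          atTop)
      (nhdsWithin 0 (Set.Ioi 0)) ≤ (γ : EReal) ∧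
    Filter.limsup (fun z : ℝ =>
        Filter.limsup (fun t : ℝ =>
            (((z * t)⁻¹ * Real.log (∫ ω, Real.exp (z * ξ t ω) ∂P t) : ℝ) : EReal))
          atTop)
      (nhdsWithin 0 (Set.Ioi 0)) < (M : EReal) :=
  stmt14_general M γ lam hγM hlam Ω P ξ hξ A hM hA hP
end

section
/- Let T > 0 and let H : ℝ^d × ℝ^d → ℝ be jointly continuous with β ↦ H(x,β) convex for each x and H(x,0) = 0 for all x, and define L(x,α) = sup_{β∈ℝ^d}(⟨α,β⟩ − H(x,β)) ∈ [0,+∞]. Let v : [0,T] → ℝ^d be bounded and Borel measurable, and let ψⁿ, ψ : [0,T] → ℝ^d be continuous with ψⁿ → ψ uniformly on [0,T]. Then liminf_{n→∞} ∫₀ᵀ L(ψⁿ_t, v_t) dt ≥ ∫₀ᵀ L(ψ_t, v_t) dt, the integrals being taken in [0,+∞]. -/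
open MeasureTheory Set Filter Topology
open scoped ENNReal

/-!
`L` is a supremum of functions continuous in `(x, α)`, hence jointly lower semicontinuous and
Borel measurable. Along the pointwise convergent curves `(ψⁿ_t, v_t) → (ψ_t, v_t)` this gives
`L(ψ_t, v_t) ≤ liminf L(ψⁿ_t, v_t)`, which integrates to the claim by Fatou's lemma.
-/

theorem LowerSemicontinuous.le_liminf_comp {X ι : Type*} [TopologicalSpace X] {f : X → ℝ≥0∞}
    (hf : LowerSemicontinuous f) {l : Filter ι} {g : ι → X} {x : X}
    (hg : Tendsto g l (𝓝 x)) : f x ≤ liminf (fun i => f (g i)) l :=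
  (hf.le_liminf x).trans (liminf_le_liminf_of_le hg)

theorem lintegral_comp_le_liminf_of_lowerSemicontinuous {α X : Type*} [MeasurableSpace α]
    [TopologicalSpace X] [MeasurableSpace X] [OpensMeasurableSpace X] {μ : Measure α}
    {f : X → ℝ≥0∞} (hf : LowerSemicontinuous f) {g : ℕ → α → X} {g₀ : α → X}
    (hg : ∀ n, Measurable (g n)) (hlim : ∀ᵐ a ∂μ, Tendsto (fun n => g n a) atTop (𝓝 (g₀ a))) :
    ∫⁻ a, f (g₀ a) ∂μ ≤ liminf (fun n => ∫⁻ a, f (g n a) ∂μ) atTop :=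
  calc ∫⁻ a, f (g₀ a) ∂μ ≤ ∫⁻ a, liminf (fun n => f (g n a)) atTop ∂μ :=
        lintegral_mono_ae (hlim.mono fun _ ha => hf.le_liminf_comp ha)
    _ ≤ liminf (fun n => ∫⁻ a, f (g n a) ∂μ) atTop :=
        lintegral_liminf_le fun n => hf.measurable.comp (hg n)

theorem lowerSemicontinuous_legendre {E : Type*} [NormedAddCommGroup E] [InnerProductSpace ℝ E]
    {H : E → E → ℝ} (hH : Continuous fun p : E × E => H p.1 p.2) :
    LowerSemicontinuous fun p : E × E => ⨆ β, ENNReal.ofReal (inner ℝ p.2 β - H p.1 β) :=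
  lowerSemicontinuous_iSup fun _ => (ENNReal.continuous_ofReal.comp
    ((continuous_snd.inner continuous_const).sub
      (hH.comp (continuous_fst.prodMk continuous_const)))).lowerSemicontinuous

theorem stmt19_general {d : ℕ} (T : ℝ)
    (H : EuclideanSpace ℝ (Fin d) → EuclideanSpace ℝ (Fin d) → ℝ)
    (hHc : Continuous fun p : EuclideanSpace ℝ (Fin d) × EuclideanSpace ℝ (Fin d) => H p.1 p.2)
    (L : EuclideanSpace ℝ (Fin d) → EuclideanSpace ℝ (Fin d) → ℝ≥0∞)
    (hL : ∀ x α, L x α = ⨆ β, ENNReal.ofReal ((inner ℝ α β : ℝ) - H x β))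
    (v : ℝ → EuclideanSpace ℝ (Fin d)) (hv : Measurable v)
    (ψn : ℕ → ℝ → EuclideanSpace ℝ (Fin d)) (ψ : ℝ → EuclideanSpace ℝ (Fin d))
    (hψnc : ∀ n, Continuous (ψn n))
    (hconv' : TendstoUniformlyOn ψn ψ atTop (Icc 0 T)) :
    ∫⁻ t in Icc (0:ℝ) T, L (ψ t) (v t) ≤
      Filter.liminf (fun n => ∫⁻ t in Icc (0:ℝ) T, L (ψn n t) (v t)) atTop := by
  have hLlsc : LowerSemicontinuous
      fun p : EuclideanSpace ℝ (Fin d) × EuclideanSpace ℝ (Fin d) => L p.1 p.2 := by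
    simpa only [hL] using lowerSemicontinuous_legendre hHc
  refine lintegral_comp_le_liminf_of_lowerSemicontinuous hLlsc (g := fun n t => (ψn n t, v t))
    (g₀ := fun t => (ψ t, v t)) (fun n => (hψnc n).measurable.prodMk hv) ?_
  exact (ae_restrict_mem measurableSet_Icc).mono fun t ht =>
    (hconv'.tendsto_at ht).prodMk_nhds tendsto_const_nhds

/-- Lower semicontinuity of the auxiliary action functional in the frozen argument:
if `ψⁿ → ψ` uniformly on `[0,T]` and `v` is bounded measurable, then
`liminf_n ∫₀ᵀ L(ψⁿ_t, v_t) dt ≥ ∫₀ᵀ L(ψ_t, v_t) dt` in `[0,∞]`, where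
`L(x,α) = sup_β (⟨α,β⟩ − H(x,β))`. -/
theorem stmt19 {d : ℕ} (T : ℝ) (hT : 0 < T)
    (H : EuclideanSpace ℝ (Fin d) → EuclideanSpace ℝ (Fin d) → ℝ)
    (hHc : Continuous fun p : EuclideanSpace ℝ (Fin d) × EuclideanSpace ℝ (Fin d) => H p.1 p.2)
    (hconv : ∀ x, ConvexOn ℝ Set.univ (H x))
    (h0 : ∀ x, H x 0 = 0)
    (L : EuclideanSpace ℝ (Fin d) → EuclideanSpace ℝ (Fin d) → ℝ≥0∞)
    (hL : ∀ x α, L x α = ⨆ β, ENNReal.ofReal ((inner ℝ α β : ℝ) - H x β))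
    (v : ℝ → EuclideanSpace ℝ (Fin d)) (hv : Measurable v)
    (hvbdd : ∃ C : ℝ, ∀ t, ‖v t‖ ≤ C)
    (ψn : ℕ → ℝ → EuclideanSpace ℝ (Fin d)) (ψ : ℝ → EuclideanSpace ℝ (Fin d))
    (hψnc : ∀ n, Continuous (ψn n)) (hψc : Continuous ψ)
    (hconv' : TendstoUniformlyOn ψn ψ atTop (Icc 0 T)) :
    ∫⁻ t in Icc (0:ℝ) T, L (ψ t) (v t) ≤
      Filter.liminf (fun n => ∫⁻ t in Icc (0:ℝ) T, L (ψn n t) (v t)) atTop :=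
  stmt19_general T H hHc L hL v hv ψn ψ hψnc hconv'
end
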